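/- Let ω ∈ {0,2}^r, ω̄ its digit-swap (0↔2), and let 𝟎 denote the string of r zeros. Then the purely periodic base-3 number with repeating block ωω̄𝟎 (period 3r) is in the Cantor middle-thirds set and its reduced denominator divides 3^{2r} + 3^r + 1. -/

import Mathlib

/-!
The block `ωω̄𝟎` has all its digits in `{0, 2}`, so the purely periodic expansion with this
block is in the Cantor set, and its value is `N / (3^{3r} - 1)` with `N` the value of the block.
Writing `A`, `B` for the values of `ω` and `ω̄`, the two blocks add up to the all-`2` block, so
`A + B + 1 = 3^r`. Hence `N = 3^r (3^r A + B) = 3^r (3^r - 1) (A + 1)`, and the factor `3^r - 1`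
of `3^{3r} - 1 = (3^r - 1)(3^{2r} + 3^r + 1)` cancels.
-/

/-- The Cantor middle-thirds set. -/
def cantorMiddleThirds : Set ℝ :=
  {x | ∃ a : ℕ → ℕ, (∀ i, a i = 0 ∨ a i = 2) ∧ x = ∑' i : ℕ, (a i : ℝ) / 3 ^ (i + 1)}

open Finset

section BlockValue

variable (b : ℕ)

def blockValue {n : ℕ} (u : Fin n → ℕ) : ℕ := ∑ j, u j * b ^ (n - 1 - j)

@[simp]
lemma blockValue_zero (n : ℕ) : blockValue b (0 : Fin n → ℕ) = 0 := by
  simp [blockValue]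

lemma sum_mul_pow_eq_blockValue_mul {n : ℕ} (u : Fin n → ℕ) (k : ℕ) :
    ∑ j : Fin n, u j * b ^ (n + k - 1 - j) = blockValue b u * b ^ k := by
  rw [blockValue, sum_mul]
  refine sum_congr rfl fun j _ => ?_
  rw [mul_assoc, ← pow_add]
  congr 2
  omega

lemma blockValue_append {m n : ℕ} (u : Fin m → ℕ) (v : Fin n → ℕ) :
    blockValue b (Fin.append u v) = blockValue b u * b ^ n + blockValue b v := by
  rw [blockValue, Fin.sum_univ_add, ← sum_mul_pow_eq_blockValue_mul]
  congr 1
  · refine sum_congr rfl fun j _ => ?_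
    simp only [Fin.append_left, Fin.val_castAdd]
  · refine sum_congr rfl fun j _ => ?_
    simp only [Fin.append_right, Fin.val_natAdd]
    congr 2
    omega

lemma blockValue_add_blockValue_complement {n : ℕ} (u : Fin n → ℕ) (hu : ∀ j, u j < b) :
    blockValue b u + blockValue b (fun j => b - 1 - u j) + 1 = b ^ n := by
  rcases n.eq_zero_or_pos with rfl | hn
  · simp [blockValue]
  have hb : b - 1 + 1 = b := Nat.sub_add_cancel (hu ⟨0, hn⟩).pos
  have hdigit : ∀ j : Fin n, u j * b ^ (n - 1 - j) + (b - 1 - u j) * b ^ (n - 1 - j) =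
      (b - 1) * b ^ (n - 1 - j) := fun j => by
    rw [← add_mul, Nat.add_sub_cancel' (Nat.le_sub_one_of_lt (hu j))]
  rw [blockValue, blockValue, ← sum_add_distrib]
  simp only [hdigit]
  rw [← mul_sum, Fin.sum_univ_eq_sum_range (fun k => b ^ (n - 1 - k)),
    sum_range_reflect (fun k => b ^ k), mul_comm]
  simpa only [hb] using geom_sum_mul_add (b - 1) n

end BlockValue

section PeriodicExpansion

variable {p b : ℕ} {d : ℕ → ℕ}

lemma summable_digits_div_pow_of_periodic (hb : 1 < b) (hp : p ≠ 0)
    (hd : Function.Periodic d p) : Summable fun i : ℕ => (d i : ℝ) / (b : ℝ) ^ (i + 1) := by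
  have hb' : (1 : ℝ) < b := by exact_mod_cast hb
  refine Summable.of_nonneg_of_le (fun i => by positivity) (fun i => ?_)
    ((summable_geometric_of_lt_one (by positivity) (inv_lt_one_of_one_lt₀ hb')).mul_left
      (∑ j ∈ range p, (d j : ℝ)))
  have hdi : (d i : ℝ) ≤ ∑ j ∈ range p, (d j : ℝ) := by
    rw [← hd.map_mod_nat i]
    exact single_le_sum (f := fun j => (d j : ℝ)) (fun j _ => by positivity)
      (mem_range.2 (Nat.mod_lt i (Nat.pos_of_ne_zero hp)))
  rw [inv_pow, ← div_eq_mul_inv]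
  exact div_le_div₀ (by positivity) hdi (by positivity) (pow_le_pow_right₀ hb'.le i.le_succ)

lemma tsum_digits_div_pow_of_periodic (hb : 1 < b) (hp : p ≠ 0) (hd : Function.Periodic d p) :
    ∑' i : ℕ, (d i : ℝ) / (b : ℝ) ^ (i + 1) =
      blockValue b (fun j : Fin p => d j) / ((b : ℝ) ^ p - 1) := by
  set f : ℕ → ℝ := fun i => (d i : ℝ) / (b : ℝ) ^ (i + 1) with hf
  have hbp : (1 : ℝ) < (b : ℝ) ^ p := one_lt_pow₀ (by exact_mod_cast hb) hp
  -- The tail after one period is the whole sum scaled by `b⁻ᵖ`.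
  have hshift : ∀ i, f (i + p) = f i / (b : ℝ) ^ p := fun i => by
    simp only [hf, hd i]
    rw [add_right_comm, pow_add, div_div]
  have hsum : Summable f := summable_digits_div_pow_of_periodic hb hp hd
  have hrec := hsum.sum_add_tsum_nat_add p
  simp only [hshift, tsum_div_const] at hrec
  have hblock : (∑ i ∈ range p, f i) * (b : ℝ) ^ p = blockValue b (fun j : Fin p => d j) := by
    rw [← Fin.sum_univ_eq_sum_range, blockValue, sum_mul]
    push_cast
    refine sum_congr rfl fun j _ => ?_
    have hsplit : (b : ℝ) ^ p = b ^ (p - 1 - j) * b ^ ((j : ℕ) + 1) := by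
      rw [← pow_add]
      congr 1
      omega
    rw [hf, hsplit]
    field_simp
  rw [← hblock, eq_div_iff (by linarith)]
  field_simp at hrec
  linarith

end PeriodicExpansion

lemma Rat.den_natCast_div_natCast_dvd (m n : ℕ) : ((m : ℚ) / n).den ∣ n := by
  have h := Rat.den_dvd m n
  rw [Rat.divInt_eq_div] at h
  push_cast at h
  exact_mod_cast h

lemma Fin.forall_append_apply {α : Type*} {m n : ℕ} {P : α → Prop} {u : Fin m → α}
    {v : Fin n → α} (hu : ∀ i, P (u i)) (hv : ∀ i, P (v i)) (k : Fin (m + n)) :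
    P (Fin.append u v k) :=
  Fin.addCases (fun i => by rw [Fin.append_left]; exact hu i)
    (fun i => by rw [Fin.append_right]; exact hv i) k

section CantorCycle

variable {r : ℕ} (ω : Fin r → ℕ)

def digitSwap : Fin r → ℕ := fun j => 2 - ω j

def cycleBlock : Fin (r + r + r) → ℕ := Fin.append (Fin.append ω (digitSwap ω)) 0

variable {ω}

lemma cycleBlock_eq_zero_or_two (hω : ∀ j, ω j = 0 ∨ ω j = 2) (j : Fin (r + r + r)) :
    cycleBlock ω j = 0 ∨ cycleBlock ω j = 2 := by
  have hswap : ∀ k, digitSwap ω k = 0 ∨ digitSwap ω k = 2 := fun k => by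
    rcases hω k with h | h <;> simp [digitSwap, h]
  exact Fin.forall_append_apply (P := fun d => d = 0 ∨ d = 2)
    (Fin.forall_append_apply (P := fun d => d = 0 ∨ d = 2) hω hswap) (fun _ => Or.inl rfl) j

lemma blockValue_add_blockValue_digitSwap (hω : ∀ j, ω j = 0 ∨ ω j = 2) :
    blockValue 3 ω + blockValue 3 (digitSwap ω) + 1 = 3 ^ r :=
  blockValue_add_blockValue_complement 3 ω fun j => by rcases hω j with h | h <;> omega

lemma sum_add_sum_eq_blockValue_cycleBlock :
    ∑ j : Fin r, ω j * 3 ^ (3 * r - 1 - (j : ℕ)) +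
        ∑ j : Fin r, (2 - ω j) * 3 ^ (2 * r - 1 - (j : ℕ)) = blockValue 3 (cycleBlock ω) := by
  have h3 : 3 * r = r + 2 * r := by ring
  have h2 : 2 * r = r + r := by ring
  rw [h3, sum_mul_pow_eq_blockValue_mul, h2]
  erw [sum_mul_pow_eq_blockValue_mul 3 (digitSwap ω)]
  simp only [cycleBlock, blockValue_append, blockValue_zero, pow_add]
  ring

lemma blockValue_cycleBlock_div (hr : 0 < r) (hω : ∀ j, ω j = 0 ∨ ω j = 2) :
    (blockValue 3 (cycleBlock ω) : ℚ) / (3 ^ (3 * r) - 1) =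
      ((3 ^ r * (blockValue 3 ω + 1) : ℕ) : ℚ) / ((3 ^ (2 * r) + 3 ^ r + 1 : ℕ) : ℚ) := by
  have hsum : (blockValue 3 ω : ℚ) + blockValue 3 (digitSwap ω) + 1 = 3 ^ r := by
    exact_mod_cast blockValue_add_blockValue_digitSwap hω
  have hx : (1 : ℚ) < 3 ^ (3 * r) := one_lt_pow₀ (by norm_num) (by omega)
  simp only [cycleBlock, blockValue_append, blockValue_zero]
  push_cast
  rw [div_eq_div_iff (sub_ne_zero.2 hx.ne') (by positivity), mul_comm 3 r, mul_comm 2 r,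
    pow_mul, pow_mul]
  linear_combination (3 ^ r * ((3 ^ r) ^ 2 + 3 ^ r + 1) : ℚ) * hsum

end CantorCycle

/-- For `ω ∈ {0,2}^r` with digit-swap `ω̄` and `𝟎` the string of `r` zeros,
the purely periodic base-3 number with repeating block `ωω̄𝟎` (period `3r`)
lies in the Cantor set and its reduced denominator divides `3^{2r}+3^r+1`. -/
theorem stmt_15 (r : ℕ) (hr : 0 < r) (ω : Fin r → ℕ) (hω : ∀ j, ω j = 0 ∨ ω j = 2) :
    ((((∑ j : Fin r, ω j * 3 ^ (3 * r - 1 - (j : ℕ)) +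
        ∑ j : Fin r, (2 - ω j) * 3 ^ (2 * r - 1 - (j : ℕ)) : ℕ) : ℝ) /
          (3 ^ (3 * r) - 1)) ∈ cantorMiddleThirds) ∧
    (((∑ j : Fin r, ω j * 3 ^ (3 * r - 1 - (j : ℕ)) +
        ∑ j : Fin r, (2 - ω j) * 3 ^ (2 * r - 1 - (j : ℕ)) : ℕ) : ℚ) /
          (3 ^ (3 * r) - 1)).den ∣ 3 ^ (2 * r) + 3 ^ r + 1 := by
  have : NeZero (r + r + r) := ⟨by omega⟩
  rw [sum_add_sum_eq_blockValue_cycleBlock]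
  refine ⟨⟨fun i => cycleBlock ω (Fin.ofNat _ i), fun i => cycleBlock_eq_zero_or_two hω _, ?_⟩,
    ?_⟩
  · have hper : Function.Periodic (fun i => cycleBlock ω (Fin.ofNat _ i)) (r + r + r) :=
      fun i => congrArg (cycleBlock ω) (Fin.ext (by simp))
    have htsum := tsum_digits_div_pow_of_periodic (b := 3) (by norm_num) (by omega) hper
    simp only [Nat.cast_ofNat, Fin.ofNat_val_eq_self] at htsum
    rw [htsum, show (3 : ℝ) ^ (r + r + r) = 3 ^ (3 * r) by ring]
  · rw [blockValue_cycleBlock_div hr hω]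
    exact Rat.den_natCast_div_natCast_dvd _ _
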